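/- Let Λ = {α ∈ M_B : α^⋆ ∈ W} where W ⊂ ℝ³ is a set with nonempty interior such that M_B^⋆ is dense in ℝ³. Then for every finite subset F of M_B there exist k ∈ ℕ and α₀ ∈ M_B such that the expansive homothety h(x) = τ^k x + α₀ maps F into Λ. -/

import Mathlib

/-!
Multiplication by `τ` preserves `M_B` and acts on the internal space as multiplication by the
Galois conjugate `ψ = 1 - τ`, which has `|ψ| < 1`. Pick `α₀ ∈ M_B` with `α₀^⋆` in the interior
of `W` (density); then `(τ^k v + α₀)^⋆ = ψ^k v^⋆ + α₀^⋆` tends to `α₀^⋆` for each of the finitely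
many `v ∈ F`, so it lies in `int(W)` for all large `k`.
-/

noncomputable def τ : ℝ := (1 + Real.sqrt 5) / 2

/-- Embedding of `ℤ[τ] ≅ ℤ × ℤ` into `ℝ`, `(a, b) ↦ a + bτ`. -/
noncomputable def embZ (p : ℤ × ℤ) : ℝ := (p.1 : ℝ) + (p.2 : ℝ) * τ

/-- Galois conjugation in coordinates: `a + bτ ↦ (a+b) − bτ`. -/
def conjZ (p : ℤ × ℤ) : ℤ × ℤ := (p.1 + p.2, -p.2)

/-- The physical embedding `ℤ[τ]³ → ℝ³`. -/
noncomputable def embV (v : Fin 3 → ℤ × ℤ) : EuclideanSpace ℝ (Fin 3) :=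
  (WithLp.equiv 2 (Fin 3 → ℝ)).symm fun i => embZ (v i)

/-- The star map (coordinatewise Galois conjugation) `ℤ[τ]³ → ℝ³`. -/
noncomputable def starV (v : Fin 3 → ℤ × ℤ) : EuclideanSpace ℝ (Fin 3) :=
  (WithLp.equiv 2 (Fin 3 → ℝ)).symm fun i => embZ (conjZ (v i))

/-- The body-centred icosahedral module `M_B` in `ℤ[τ]`-coordinates:
`τ²β + τγ + δ ≡ 0 (mod 2)`. -/
def MBz : Set (Fin 3 → ℤ × ℤ) :=
  {v | ∃ w : ℤ × ℤ, τ ^ 2 * embZ (v 0) + τ * embZ (v 1) + embZ (v 2) = 2 * embZ w}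

open Real goldenRatio Filter Topology

theorem exists_pow_smul_add_mem_of_dense {𝕜 E ι : Type*} [NormedField 𝕜] [AddCommGroup E]
    [TopologicalSpace E] [Module 𝕜 E] [ContinuousSMul 𝕜 E] [ContinuousAdd E]
    {U S : Set E} (hU : IsOpen U) (hUne : U.Nonempty) (hS : Dense S) {r : 𝕜} (hr : ‖r‖ < 1)
    (F : Finset ι) (f : ι → E) :
    ∃ k : ℕ, 0 < k ∧ ∃ s ∈ S, ∀ i ∈ F, r ^ k • f i + s ∈ U := by
  obtain ⟨s, hsU, hsS⟩ := hS.inter_open_nonempty U hU hUne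
  have hlim (i : ι) : Tendsto (fun k : ℕ => r ^ k • f i + s) atTop (𝓝 s) := by
    simpa using ((tendsto_pow_atTop_nhds_zero_of_norm_lt_one hr).smul_const (f i)).add_const s
  have hevent : ∀ᶠ k in atTop, 0 < k ∧ ∀ i ∈ F, r ^ k • f i + s ∈ U :=
    (eventually_gt_atTop 0).and
      ((eventually_all_finset F).2 fun i _ => hlim i (hU.mem_nhds hsU))
  obtain ⟨k, hk, hkU⟩ := hevent.exists
  exact ⟨k, hk, s, hsS, hkU⟩

lemma tau_eq_goldenRatio : τ = φ := rfl

lemma norm_goldenConj_lt_one : ‖ψ‖ < 1 :=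
  abs_lt.2 ⟨neg_one_lt_goldenConj, goldenConj_neg.trans one_pos⟩

lemma embZ_add (p q : ℤ × ℤ) : embZ (p + q) = embZ p + embZ q := by
  simp only [embZ, Prod.fst_add, Prod.snd_add, Int.cast_add]; ring

lemma conjZ_add (p q : ℤ × ℤ) : conjZ (p + q) = conjZ p + conjZ q := by
  simp only [conjZ, Prod.fst_add, Prod.snd_add, Prod.mk_add_mk, Prod.mk.injEq]; constructor <;> ring

lemma embZ_conjZ (p : ℤ × ℤ) : embZ (conjZ p) = p.1 + p.2 * ψ := by
  simp only [embZ, conjZ, tau_eq_goldenRatio, ← one_sub_goldenConj]; push_cast; ring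

/-- `(a + bτ)τ = b + (a + b)τ`, since `τ² = τ + 1`. -/
def mulτZ (p : ℤ × ℤ) : ℤ × ℤ := (p.2, p.1 + p.2)

def mulτV (v : Fin 3 → ℤ × ℤ) : Fin 3 → ℤ × ℤ := fun i => mulτZ (v i)

lemma embZ_mulτZ (p : ℤ × ℤ) : embZ (mulτZ p) = τ * embZ p := by
  simp only [embZ, mulτZ, tau_eq_goldenRatio]; push_cast
  linear_combination (-(p.2 : ℝ)) * goldenRatio_sq

lemma embZ_conjZ_mulτZ (p : ℤ × ℤ) : embZ (conjZ (mulτZ p)) = ψ * embZ (conjZ p) := by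
  simp only [embZ_conjZ, mulτZ]; push_cast
  linear_combination (-(p.2 : ℝ)) * goldenConj_sq

lemma embV_add (v w : Fin 3 → ℤ × ℤ) : embV (v + w) = embV v + embV w := by
  ext i; simp [embV, embZ_add]

lemma starV_add (v w : Fin 3 → ℤ × ℤ) : starV (v + w) = starV v + starV w := by
  ext i; simp [starV, conjZ_add, embZ_add]

lemma embV_mulτV (v : Fin 3 → ℤ × ℤ) : embV (mulτV v) = τ • embV v := by
  ext i; simp [embV, mulτV, embZ_mulτZ]

lemma starV_mulτV (v : Fin 3 → ℤ × ℤ) : starV (mulτV v) = ψ • starV v := by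
  ext i; simp [starV, mulτV, embZ_conjZ_mulτZ]

lemma embV_iterate_mulτV (k : ℕ) (v : Fin 3 → ℤ × ℤ) :
    embV (mulτV^[k] v) = τ ^ k • embV v := by
  rw [(Function.Semiconj.iterate_right embV_mulτV k) v, smul_iterate_apply]

lemma starV_iterate_mulτV (k : ℕ) (v : Fin 3 → ℤ × ℤ) :
    starV (mulτV^[k] v) = ψ ^ k • starV v := by
  rw [(Function.Semiconj.iterate_right starV_mulτV k) v, smul_iterate_apply]

lemma MBz_add {v w : Fin 3 → ℤ × ℤ} (hv : v ∈ MBz) (hw : w ∈ MBz) : v + w ∈ MBz := by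
  obtain ⟨a, ha⟩ := hv
  obtain ⟨b, hb⟩ := hw
  exact ⟨a + b, by simp only [Pi.add_apply, embZ_add]; linear_combination ha + hb⟩

lemma mapsTo_mulτV_MBz : Set.MapsTo mulτV MBz MBz := fun _ ⟨a, ha⟩ =>
  ⟨mulτZ a, by simp only [mulτV, embZ_mulτZ]; linear_combination τ * ha⟩

/-- For the model set `Λ = {α ∈ M_B : α^⋆ ∈ W}`, with `int(W) ≠ ∅` and `M_B^⋆`
dense, every finite `F ⊂ M_B` is mapped into `Λ` by an expansive homothety
`x ↦ τ^k x + α₀` with `k ∈ ℕ` and `α₀ ∈ M_B`. -/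
theorem finite_subset_into_model_set (W : Set (EuclideanSpace ℝ (Fin 3)))
    (hW : (interior W).Nonempty) (hdense : Dense (starV '' MBz))
    (F : Finset (Fin 3 → ℤ × ℤ)) (hF : ∀ v ∈ F, v ∈ MBz) :
    ∃ k : ℕ, 0 < k ∧ ∃ α₀ ∈ MBz, ∀ v ∈ F,
      τ ^ k • embV v + embV α₀ ∈ embV '' {w ∈ MBz | starV w ∈ W} := by
  obtain ⟨k, hk, _, ⟨α₀, hα₀, rfl⟩, hkW⟩ := exists_pow_smul_add_mem_of_dense isOpen_interior hW
    hdense norm_goldenConj_lt_one F starV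
  refine ⟨k, hk, α₀, hα₀, fun v hv => ⟨mulτV^[k] v + α₀, ⟨?_, ?_⟩, ?_⟩⟩
  · exact MBz_add (mapsTo_mulτV_MBz.iterate k (hF v hv)) hα₀
  · rw [starV_add, starV_iterate_mulτV]
    exact interior_subset (hkW v hv)
  · rw [embV_add, embV_iterate_mulτV]
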